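/- arXiv:2409.12407 — 3 statements merged into one kernel-verified Lean document; each statement's English description precedes it below -/
import Mathlib

section
/- For the system ẋ_i = Σ_{j∈N_i} a_{ij}(x_i − x_j) x_i x_j with initial condition in ℝⁿ₊, every solution is bounded: 0 ≤ x_i(t) ≤ Σ_j x_j(0) for all i and all t ≥ 0. -/
open Finset

/-!
Each coordinate solves a scalar linear equation `ẏ = g(t) y` with `g` continuous, so
`y t = y 0 * exp (∫₀ᵗ g)` keeps the sign of `y 0`. The symmetry of the weights makes the summand
`a i j (x i - x j) x i x j` antisymmetric in `(i, j)`, so `Σ i, x i` is conserved; a nonnegative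
coordinate is then bounded by the total sum.
-/

theorem Finset.sum_sum_eq_zero_of_antisymm {ι G : Type*} [Fintype ι] [AddCommGroup G]
    [IsAddTorsionFree G] (f : ι → ι → G) (hf : ∀ i j, f j i = -f i j) :
    ∑ i, ∑ j, f i j = 0 := by
  rw [← self_eq_neg, ← sum_neg_distrib]
  calc ∑ i, ∑ j, f i j = ∑ j, ∑ i, f i j := sum_comm
    _ = ∑ j, ∑ i, -f j i := sum_congr rfl fun j _ => sum_congr rfl fun i _ => hf j i
    _ = ∑ j, -∑ i, f j i := by simp only [sum_neg_distrib]

theorem eq_mul_exp_integral_of_hasDerivAt_mul {y g : ℝ → ℝ} (hg : Continuous g)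
    (hy : ∀ t, HasDerivAt y (g t * y t) t) (t : ℝ) :
    y t = y 0 * Real.exp (∫ s in (0 : ℝ)..t, g s) := by
  set F : ℝ → ℝ := fun u => ∫ s in (0 : ℝ)..u, g s
  have hF : ∀ u, HasDerivAt F (g u) u := fun u => (hg.integral_hasStrictDerivAt 0 u).hasDerivAt
  have hprod : ∀ u, HasDerivAt (fun s => y s * Real.exp (-F s)) 0 u := fun u => by
    refine ((hy u).fun_mul (hF u).fun_neg.exp).congr_deriv ?_
    ring
  have hconst : y t * Real.exp (-F t) = y 0 * Real.exp (-F 0) :=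
    is_const_of_deriv_eq_zero (fun u => (hprod u).differentiableAt) (fun u => (hprod u).deriv) t 0
  have hF0 : F 0 = 0 := intervalIntegral.integral_same
  rw [hF0, neg_zero, Real.exp_zero, mul_one, Real.exp_neg, ← div_eq_mul_inv,
    div_eq_iff (Real.exp_pos _).ne'] at hconst
  exact hconst

theorem nonneg_of_hasDerivAt_mul {y g : ℝ → ℝ} (hg : Continuous g)
    (hy : ∀ t, HasDerivAt y (g t * y t) t) (h0 : 0 ≤ y 0) (t : ℝ) : 0 ≤ y t := by
  rw [eq_mul_exp_integral_of_hasDerivAt_mul hg hy t]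
  exact mul_nonneg h0 (Real.exp_pos _).le

section Dynamics

variable {ι : Type*} [Fintype ι] {a : ι → ι → ℝ} {x : ℝ → ι → ℝ}

theorem sum_coord_eq_sum_coord_zero (hsymm : ∀ i j, a i j = a j i)
    (hx : ∀ t i, HasDerivAt (fun s => x s i)
      (∑ j, a i j * (x t i - x t j) * (x t i * x t j)) t) (t : ℝ) :
    ∑ i, x t i = ∑ i, x 0 i := by
  have hsum : ∀ u, HasDerivAt (fun s => ∑ i, x s i) 0 u := fun u => by
    refine (HasDerivAt.fun_sum fun i _ => hx u i).congr_deriv ?_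
    refine sum_sum_eq_zero_of_antisymm _ fun i j => ?_
    rw [hsymm]
    ring
  exact is_const_of_deriv_eq_zero (fun u => (hsum u).differentiableAt) (fun u => (hsum u).deriv) t 0

theorem coord_nonneg
    (hx : ∀ t i, HasDerivAt (fun s => x s i)
      (∑ j, a i j * (x t i - x t j) * (x t i * x t j)) t)
    (h0 : ∀ i, 0 ≤ x 0 i) (t : ℝ) (i : ι) : 0 ≤ x t i := by
  have hcont : ∀ j, Continuous fun s => x s j := fun j =>
    continuous_iff_continuousAt.2 fun s => (hx s j).continuousAt
  refine nonneg_of_hasDerivAt_mul (y := fun s => x s i)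
    (g := fun s => ∑ j, a i j * (x s i - x s j) * x s j) (by fun_prop) (fun s => ?_) (h0 i) t
  convert hx s i using 1
  rw [sum_mul]
  exact sum_congr rfl fun j _ => by ring

end Dynamics

theorem solutions_bounded_general (n : ℕ) (a : Fin n → Fin n → ℝ)
    (hsymm : ∀ i j, a i j = a j i)
    (x : ℝ → Fin n → ℝ)
    (hx : ∀ t i, HasDerivAt (fun s => x s i)
      (∑ j, a i j * (x t i - x t j) * (x t i * x t j)) t)
    (h0 : ∀ i, 0 ≤ x 0 i) :
    ∀ t ≥ (0 : ℝ), ∀ i, 0 ≤ x t i ∧ x t i ≤ ∑ j, x 0 j := by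
  intro t _ i
  have hnonneg : ∀ j, 0 ≤ x t j := coord_nonneg hx h0 t
  refine ⟨hnonneg i, ?_⟩
  calc x t i ≤ ∑ j, x t j := single_le_sum (fun j _ => hnonneg j) (mem_univ i)
    _ = ∑ j, x 0 j := sum_coord_eq_sum_coord_zero hsymm hx t

/-- Every solution starting in the nonnegative orthant is bounded:
`0 ≤ x_i(t) ≤ Σ_j x_j(0)` for all `t ≥ 0`. -/
theorem solutions_bounded (n : ℕ) (a : Fin n → Fin n → ℝ)
    (hsymm : ∀ i j, a i j = a j i) (hnonneg : ∀ i j, 0 ≤ a i j)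
    (hdiag : ∀ i, a i i = 0)
    (x : ℝ → Fin n → ℝ)
    (hx : ∀ t i, HasDerivAt (fun s => x s i)
      (∑ j, a i j * (x t i - x t j) * (x t i * x t j)) t)
    (h0 : ∀ i, 0 ≤ x 0 i) :
    ∀ t ≥ (0 : ℝ), ∀ i, 0 ≤ x t i ∧ x t i ≤ ∑ j, x 0 j :=
  solutions_bounded_general n a hsymm x hx h0
end

section
/- Consider two agents (n = 2) with a_{12} = a_{21} = a > 0, so ẋ₁ = a(x₁ − x₂)x₁x₂ and ẋ₂ = a(x₂ − x₁)x₁x₂. If x₁(0) > x₂(0) ≥ 0, then x₁(t) − x₂(t) is nondecreasing in t, x₂(t) → 0 and x₁(t) → x₁(0) + x₂(0) as t → ∞. -/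
/-!
The total `x₁ + x₂` is conserved, and the gap `d = x₁ - x₂` and product `p = x₁ x₂` satisfy the
linear equations `d' = 2 a p d` and `p' = -a d² p`, so they keep the signs they have at time `0`:
`d > 0`, `p ≥ 0`, hence `d` is nondecreasing. With `s = x₁ + x₂` we have `4 p = s² - d²`, so `d`
is bounded by `|s|` and converges to some `L > 0`. Since `d' = (a/2)(s² - d²) d` then converges to
`(a/2)(s² - L²) L`, and the derivative of a convergent function cannot have a nonzero limit,
`L = |s|`.
-/

open Filter Topology

theorem eq_mul_exp_integral_of_hasDerivAt {f g : ℝ → ℝ} (hg : Continuous g)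
    (hf : ∀ t, HasDerivAt f (g t * f t) t) (t : ℝ) :
    f t = f 0 * Real.exp (∫ τ in (0 : ℝ)..t, g τ) := by
  set G : ℝ → ℝ := fun t => ∫ τ in (0 : ℝ)..t, g τ
  have hG : ∀ t, HasDerivAt G (g t) t := fun t =>
    intervalIntegral.integral_hasDerivAt_right (hg.intervalIntegrable _ _)
      (hg.stronglyMeasurableAtFilter _ _) hg.continuousAt
  have hF : ∀ s, HasDerivAt (fun u => f u * Real.exp (-G u)) 0 s := fun s =>
    ((hf s).fun_mul (hG s).fun_neg.exp).congr_deriv (by ring)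
  have hconst : f t * Real.exp (-G t) = f 0 * Real.exp (-G 0) :=
    is_const_of_deriv_eq_zero (fun s => (hF s).differentiableAt) (fun s => (hF s).deriv) t 0
  have hG0 : G 0 = 0 := intervalIntegral.integral_same
  rw [hG0, neg_zero, Real.exp_zero, mul_one] at hconst
  calc f t = f t * Real.exp (-G t) * Real.exp (G t) := by
        rw [mul_assoc, ← Real.exp_add, neg_add_cancel, Real.exp_zero, mul_one]
    _ = f 0 * Real.exp (G t) := by rw [hconst]

theorem eq_zero_of_tendsto_of_tendsto_deriv {f f' : ℝ → ℝ} {L M : ℝ}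
    (hf : ∀ t, HasDerivAt f (f' t) t) (hfL : Tendsto f atTop (𝓝 L))
    (hf'M : Tendsto f' atTop (𝓝 M)) : M = 0 := by
  have hslope : ∀ t, ∃ c ∈ Set.Ioo t (t + 1), f' c = f (t + 1) - f t := fun t => by
    obtain ⟨c, hc, h⟩ := exists_hasDerivAt_eq_slope f f' (lt_add_one t)
      (HasDerivAt.continuousOn fun x _ => hf x) (fun x _ => hf x)
    exact ⟨c, hc, by simpa using h⟩
  choose c hc hfc using hslope
  have hc_top : Tendsto c atTop atTop := tendsto_atTop_mono (fun t => (hc t).1.le) tendsto_id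
  have hincr : Tendsto (fun t => f (t + 1) - f t) atTop (𝓝 (L - L)) :=
    (hfL.comp (tendsto_atTop_add_const_right _ 1 tendsto_id)).sub hfL
  rw [sub_self] at hincr
  exact tendsto_nhds_unique ((hf'M.comp hc_top).congr hfc) hincr

structure IsWTASolution (a : ℝ) (x1 x2 : ℝ → ℝ) : Prop where
  hasDerivAt_fst : ∀ t, HasDerivAt x1 (a * (x1 t - x2 t) * (x1 t * x2 t)) t
  hasDerivAt_snd : ∀ t, HasDerivAt x2 (a * (x2 t - x1 t) * (x1 t * x2 t)) t

namespace IsWTASolution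

variable {a : ℝ} {x1 x2 : ℝ → ℝ}

theorem continuous_fst (hx : IsWTASolution a x1 x2) : Continuous x1 :=
  continuous_iff_continuousAt.mpr fun t => (hx.hasDerivAt_fst t).continuousAt

theorem continuous_snd (hx : IsWTASolution a x1 x2) : Continuous x2 :=
  continuous_iff_continuousAt.mpr fun t => (hx.hasDerivAt_snd t).continuousAt

theorem add_eq (hx : IsWTASolution a x1 x2) (t : ℝ) : x1 t + x2 t = x1 0 + x2 0 := by
  have hF : ∀ s, HasDerivAt (fun u => x1 u + x2 u) 0 s := fun s =>
    ((hx.hasDerivAt_fst s).fun_add (hx.hasDerivAt_snd s)).congr_deriv (by ring)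
  exact is_const_of_deriv_eq_zero (fun s => (hF s).differentiableAt) (fun s => (hF s).deriv) t 0

theorem hasDerivAt_sub (hx : IsWTASolution a x1 x2) (t : ℝ) :
    HasDerivAt (fun t => x1 t - x2 t) (2 * a * (x1 t * x2 t) * (x1 t - x2 t)) t :=
  ((hx.hasDerivAt_fst t).fun_sub (hx.hasDerivAt_snd t)).congr_deriv (by ring)

theorem hasDerivAt_mul (hx : IsWTASolution a x1 x2) (t : ℝ) :
    HasDerivAt (fun t => x1 t * x2 t) (-a * (x1 t - x2 t) ^ 2 * (x1 t * x2 t)) t :=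
  ((hx.hasDerivAt_fst t).fun_mul (hx.hasDerivAt_snd t)).congr_deriv (by ring)

theorem sub_pos_of_pos (hx : IsWTASolution a x1 x2) (hd0 : 0 < x1 0 - x2 0) (t : ℝ) :
    0 < x1 t - x2 t := by
  rw [eq_mul_exp_integral_of_hasDerivAt
    (continuous_const.mul (hx.continuous_fst.mul hx.continuous_snd)) hx.hasDerivAt_sub t]
  exact mul_pos hd0 (Real.exp_pos _)

theorem mul_nonneg_of_nonneg (hx : IsWTASolution a x1 x2) (hp0 : 0 ≤ x1 0 * x2 0) (t : ℝ) :
    0 ≤ x1 t * x2 t := by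
  rw [eq_mul_exp_integral_of_hasDerivAt
    (continuous_const.mul ((hx.continuous_fst.sub hx.continuous_snd).pow 2)) hx.hasDerivAt_mul t]
  exact mul_nonneg hp0 (Real.exp_pos _).le

theorem monotone_sub (ha : 0 ≤ a) (hx : IsWTASolution a x1 x2) (hd0 : 0 < x1 0 - x2 0)
    (hp0 : 0 ≤ x1 0 * x2 0) : Monotone fun t => x1 t - x2 t := by
  refine monotone_of_deriv_nonneg (fun t => (hx.hasDerivAt_sub t).differentiableAt) fun t => ?_
  rw [(hx.hasDerivAt_sub t).deriv]
  have := hx.sub_pos_of_pos hd0 t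
  have := hx.mul_nonneg_of_nonneg hp0 t
  positivity

theorem tendsto_sub (ha : 0 < a) (hx : IsWTASolution a x1 x2) (hd0 : 0 < x1 0 - x2 0)
    (hp0 : 0 ≤ x1 0 * x2 0) :
    Tendsto (fun t => x1 t - x2 t) atTop (𝓝 |x1 0 + x2 0|) := by
  set s := x1 0 + x2 0
  set d : ℝ → ℝ := fun t => x1 t - x2 t
  have hsq : ∀ t, d t ^ 2 + 4 * (x1 t * x2 t) = s ^ 2 := fun t => by
    rw [← show x1 t + x2 t = s from hx.add_eq t]; ring
  have hle : ∀ t, d t ≤ |s| := fun t =>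
    (le_abs_self _).trans (sq_le_sq.mp (by nlinarith [hsq t, hx.mul_nonneg_of_nonneg hp0 t]))
  have hbdd : BddAbove (Set.range d) := ⟨|s|, Set.forall_mem_range.2 hle⟩
  have hdL := tendsto_atTop_ciSup (hx.monotone_sub ha.le hd0 hp0) hbdd
  set L := ⨆ t, d t
  have hLpos : 0 < L := hd0.trans_le (le_ciSup hbdd 0)
  have hderiv : ∀ t, HasDerivAt d (a / 2 * (s ^ 2 - d t ^ 2) * d t) t := fun t =>
    (hx.hasDerivAt_sub t).congr_deriv (by rw [← hsq t]; ring)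
  have hlim : a / 2 * (s ^ 2 - L ^ 2) * L = 0 :=
    eq_zero_of_tendsto_of_tendsto_deriv hderiv hdL
      (((tendsto_const_nhds.sub (hdL.pow 2)).const_mul _).mul hdL)
  have hLs : L ^ 2 = s ^ 2 := by
    have : s ^ 2 - L ^ 2 = 0 := by simpa [ha.ne', hLpos.ne'] using hlim
    linarith
  rwa [← (sq_eq_sq_iff_abs_eq_abs L s).mp hLs, abs_of_pos hLpos]

end IsWTASolution

/-- Two-agent winners-take-all: if `x₁(0) > x₂(0) ≥ 0`, the difference is nondecreasing,
the weaker agent's state tends to `0`, and the stronger agent's state tends to the total. -/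
theorem two_agent_winner (a : ℝ) (ha : 0 < a) (x1 x2 : ℝ → ℝ)
    (h1 : ∀ t, HasDerivAt x1 (a * (x1 t - x2 t) * (x1 t * x2 t)) t)
    (h2 : ∀ t, HasDerivAt x2 (a * (x2 t - x1 t) * (x1 t * x2 t)) t)
    (hgt : x2 0 < x1 0) (hnn : 0 ≤ x2 0) :
    MonotoneOn (fun t => x1 t - x2 t) (Set.Ici (0 : ℝ)) ∧
    Tendsto x2 atTop (𝓝 0) ∧
    Tendsto x1 atTop (𝓝 (x1 0 + x2 0)) := by
  have hx : IsWTASolution a x1 x2 := ⟨h1, h2⟩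
  have hd0 : 0 < x1 0 - x2 0 := sub_pos.mpr hgt
  have hp0 : 0 ≤ x1 0 * x2 0 := mul_nonneg (hnn.trans hgt.le) hnn
  have hd := hx.tendsto_sub ha hd0 hp0
  rw [abs_of_pos (by linarith)] at hd
  refine ⟨(hx.monotone_sub ha.le hd0 hp0).monotoneOn _, ?_, ?_⟩
  · have h := (tendsto_const_nhds (x := x1 0 + x2 0)).sub hd |>.div_const 2
    rw [sub_self, zero_div] at h
    exact h.congr fun t => by linarith [hx.add_eq t]
  · have h := (tendsto_const_nhds (x := x1 0 + x2 0)).add hd |>.div_const 2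
    rw [add_self_div_two] at h
    exact h.congr fun t => by linarith [hx.add_eq t]
end

section
/- Let ℓ be an agent with no neighbors among the non-vanishing agents, i.e., ẋ_ℓ = Σ_{j∈N_ℓ} a_{ℓj}(x_ℓ − x_j)x_ℓ x_j where every j ∈ N_ℓ satisfies x_j(t) → 0 as t → ∞. If x_ℓ(t) does not converge to 0, then x_ℓ(t) converges to a positive limit. (Isolated-in-the-quotient winner converges.) -/
open Filter Topology Finset

/-! A neighbour `j` of `ℓ` contributes `a ℓ j (x_ℓ - x_j) x_ℓ x_j` to `ẋ_ℓ`, which is nonnegative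
as soon as `x_j ≤ x_ℓ`. Pick `ε` with `x_ℓ ≥ ε` at arbitrarily late times, and a time `t₀`
after which all neighbours stay below `ε / 2` and at which `x_ℓ(t₀) ≥ ε`. Then `x_ℓ` can never
drop to `ε / 2` after `t₀` (at the first such time it would have been nondecreasing since `t₀`),
so `ẋ_ℓ ≥ 0` on `[t₀, ∞)`, and a bounded nondecreasing function converges, here to a limit
at least `ε`. -/

theorem winnerTakeAll_rate_nonneg {ι : Type*} [Fintype ι] {w y : ι → ℝ} {i : ι}
    (hw : ∀ j, 0 ≤ w j) (hy : ∀ j, 0 ≤ y j) (hle : ∀ j, w j ≠ 0 → y j ≤ y i) :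
    0 ≤ ∑ j, w j * (y i - y j) * (y i * y j) := by
  refine sum_nonneg fun j _ => ?_
  rcases eq_or_ne (w j) 0 with hj | hj
  · simp [hj]
  · exact mul_nonneg (mul_nonneg (hw j) (sub_nonneg.2 (hle j hj))) (mul_nonneg (hy i) (hy j))

section Barrier

variable {f f' : ℝ → ℝ} {t₀ m : ℝ}

theorem lt_of_hasDerivAt_nonneg_above (hf : ∀ t, HasDerivAt f (f' t) t)
    (hf' : ∀ t, t₀ < t → m < f t → 0 ≤ f' t) (h₀ : m < f t₀) {t : ℝ} (ht : t₀ ≤ t) :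
    m < f t := by
  by_contra! hle
  have hcont : Continuous f := continuous_iff_continuousAt.2 fun t => (hf t).continuousAt
  set S := Set.Ici t₀ ∩ f ⁻¹' Set.Iic m
  have hbdd : BddBelow S := ⟨t₀, fun _ hu => hu.1⟩
  have hsS : sInf S ∈ S :=
    (isClosed_Ici.inter (isClosed_Iic.preimage hcont)).csInf_mem ⟨t, ht, hle⟩ hbdd
  have habove : ∀ u ∈ Set.Ico t₀ (sInf S), m < f u := fun u hu =>
    lt_of_not_ge fun h => (csInf_le hbdd ⟨hu.1, h⟩).not_gt hu.2
  have hmono : MonotoneOn f (Set.Icc t₀ (sInf S)) := by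
    refine monotoneOn_of_hasDerivWithinAt_nonneg (convex_Icc _ _) hcont.continuousOn
      (fun u _ => (hf u).hasDerivWithinAt) fun u hu => ?_
    rw [interior_Icc] at hu
    exact hf' u hu.1 (habove u ⟨hu.1.le, hu.2⟩)
  have := hmono ⟨le_rfl, hsS.1⟩ ⟨hsS.1, le_rfl⟩ hsS.1
  linarith [show f (sInf S) ≤ m from hsS.2]

theorem monotoneOn_Ici_of_hasDerivAt_nonneg_above (hf : ∀ t, HasDerivAt f (f' t) t)
    (hf' : ∀ t, t₀ < t → m < f t → 0 ≤ f' t) (h₀ : m < f t₀) :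
    MonotoneOn f (Set.Ici t₀) := by
  refine monotoneOn_of_hasDerivWithinAt_nonneg (convex_Ici _)
    (continuous_iff_continuousAt.2 fun t => (hf t).continuousAt).continuousOn
    (fun t _ => (hf t).hasDerivWithinAt) fun t ht => ?_
  rw [interior_Ici] at ht
  exact hf' t ht (lt_of_hasDerivAt_nonneg_above hf hf' h₀ (le_of_lt ht))

end Barrier

theorem MonotoneOn.exists_tendsto_atTop_ge {α β : Type*} [LinearOrder α]
    [ConditionallyCompleteLinearOrder β] [TopologicalSpace β] [OrderTopology β]
    {f : α → β} {t₀ : α} (hmono : MonotoneOn f (Set.Ici t₀))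
    (hbdd : BddAbove (f '' Set.Ici t₀)) :
    ∃ c, f t₀ ≤ c ∧ Tendsto f atTop (𝓝 c) := by
  set F : α → β := fun t => f (max t t₀)
  have hF : Monotone F := fun s t hst =>
    hmono (le_max_right s t₀) (le_max_right t t₀) (max_le_max hst le_rfl)
  have hFbdd : BddAbove (Set.range F) :=
    hbdd.mono (Set.range_subset_iff.2 fun t => Set.mem_image_of_mem f (le_max_right t t₀))
  refine ⟨⨆ t, F t, by simpa [F] using le_ciSup hFbdd t₀,
    (tendsto_atTop_ciSup hF hFbdd).congr' ?_⟩
  filter_upwards [eventually_ge_atTop t₀] with t ht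
  simp [F, max_eq_left ht]

theorem isolated_winner_converges_general (n : ℕ) (a : Fin n → Fin n → ℝ)
    (hnonneg : ∀ i j, 0 ≤ a i j)
    (x : ℝ → Fin n → ℝ)
    (hx : ∀ t i, HasDerivAt (fun s => x s i)
      (∑ j, a i j * (x t i - x t j) * (x t i * x t j)) t)
    (hnn : ∀ t i, 0 ≤ x t i) (hbdd : ∃ B : ℝ, ∀ t i, x t i ≤ B)
    (ℓ : Fin n)
    (hnbr : ∀ j, a ℓ j ≠ 0 → Tendsto (fun t => x t j) atTop (𝓝 0))
    (hℓ : ¬ Tendsto (fun t => x t ℓ) atTop (𝓝 0)) :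
    ∃ c > (0 : ℝ), Tendsto (fun t => x t ℓ) atTop (𝓝 c) := by
  obtain ⟨B, hB⟩ := hbdd
  rw [Metric.tendsto_nhds] at hℓ
  push Not at hℓ
  obtain ⟨ε, hε, hfreq⟩ := hℓ
  have hsmall : ∀ᶠ t in atTop, ∀ j, a ℓ j ≠ 0 → x t j < ε / 2 :=
    eventually_all.2 fun j => eventually_imp_distrib_left.2 fun hj =>
      (hnbr j hj).eventually_lt_const (half_pos hε)
  obtain ⟨t₀, ht₀, hsmall₀⟩ :=
    (hfreq.and_eventually (eventually_forall_ge_atTop.2 hsmall)).exists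
  rw [Real.dist_eq, sub_zero, abs_of_nonneg (hnn t₀ ℓ)] at ht₀
  have hmono : MonotoneOn (fun t => x t ℓ) (Set.Ici t₀) :=
    monotoneOn_Ici_of_hasDerivAt_nonneg_above (fun t => hx t ℓ)
      (fun t ht hm => winnerTakeAll_rate_nonneg (hnonneg ℓ) (hnn t)
        fun j hj => ((hsmall₀ t ht.le j hj).trans hm).le)
      (by linarith)
  obtain ⟨c, hc, hlim⟩ :=
    hmono.exists_tendsto_atTop_ge ⟨B, by rintro _ ⟨t, -, rfl⟩; exact hB t ℓ⟩
  exact ⟨c, by linarith, hlim⟩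

/-- If every neighbor of agent `ℓ` has a state converging to zero but `x_ℓ(t)` does not
converge to zero, then `x_ℓ(t)` converges to a positive limit. -/
theorem isolated_winner_converges (n : ℕ) (a : Fin n → Fin n → ℝ)
    (hsymm : ∀ i j, a i j = a j i) (hnonneg : ∀ i j, 0 ≤ a i j)
    (hdiag : ∀ i, a i i = 0)
    (x : ℝ → Fin n → ℝ)
    (hx : ∀ t i, HasDerivAt (fun s => x s i)
      (∑ j, a i j * (x t i - x t j) * (x t i * x t j)) t)
    (hnn : ∀ t i, 0 ≤ x t i) (hbdd : ∃ B : ℝ, ∀ t i, x t i ≤ B)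
    (ℓ : Fin n)
    (hnbr : ∀ j, a ℓ j ≠ 0 → Tendsto (fun t => x t j) atTop (𝓝 0))
    (hℓ : ¬ Tendsto (fun t => x t ℓ) atTop (𝓝 0)) :
    ∃ c > (0 : ℝ), Tendsto (fun t => x t ℓ) atTop (𝓝 c) :=
  isolated_winner_converges_general n a hnonneg x hx hnn hbdd ℓ hnbr hℓ
end
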